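/- Let X = (X_m, m ≥ 0) be a discrete time exchangeable combinatorial Lévy process on L_{[n]}, for some n ∈ ℕ. Then there exists a unique family p = (p_Y)_{Y ∈ UL_{[n]}} with each p_Y ≥ 0 and Σ_Y p_Y = 1 such that the increments X_m Δ X_{m−1} are independent and identically distributed according to p*(·) = Σ_{Y ∈ UL_{[n]}} p_Y 𝔘_Y(·). Moreover, the projection ⟨X⟩ = (⟨X_m⟩, m ≥ 0) is a Markov chain on UL_{[n]}. -/

import Mathlib

/-!
STATEMENT 11 (Theorem 4.15, finite case): for a discrete time exchangeable combinatorial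
Lévy process on `L_{[n]}` there is a unique probability vector `(p_Y)_{Y ∈ UL_{[n]}}`
such that the increments are i.i.d. with law `p* = Σ_Y p_Y 𝔘_Y`; moreover the projection
`⟨X⟩ = (⟨X_m⟩, m ≥ 0)` is a Markov chain on `UL_{[n]}`.
-/

open MeasureTheory ProbabilityTheory Filter Topology
open scoped ENNReal NNReal Classical
noncomputable section
namespace CLP

abbrev Struct {k : ℕ} (ar : Fin k → ℕ) (α : Type) : Type :=
  ∀ j : Fin k, (Fin (ar j) → α) → Bool

variable {k : ℕ}

def pb {ar : Fin k → ℕ} {α β : Type} (f : β → α) (M : Struct ar α) : Struct ar β :=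
  fun j a => M j fun i => f (a i)

def inc {ar : Fin k → ℕ} {α : Type} (M M' : Struct ar α) : Struct ar α :=
  fun j a => xor (M j a) (M' j a)

def emptyS (ar : Fin k → ℕ) (α : Type) : Struct ar α := fun _ _ => false

/-- relabeling equivalence `M ≅ M'` on `L_{[n]}` -/
def relabSetoid (ar : Fin k → ℕ) (n : ℕ) : Setoid (Struct ar (Fin n)) where
  r M M' := ∃ σ : Equiv.Perm (Fin n), pb ⇑σ M = M'
  iseqv := by
    refine ⟨fun M => ⟨Equiv.refl _, ?_⟩, ?_, ?_⟩
    · funext j a; simp [pb]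
    · rintro M M' ⟨σ, rfl⟩
      exact ⟨σ.symm, by funext j a; simp [pb]⟩
    · rintro M M' M'' ⟨σ, rfl⟩ ⟨τ, rfl⟩
      exact ⟨τ.trans σ, by funext j a; simp [pb]⟩

/-- `UL_{[n]}`: isomorphism classes of `L`-structures over `[n]` -/
abbrev UL (ar : Fin k → ℕ) (n : ℕ) : Type := Quotient (relabSetoid ar n)

/-- `𝔘_Y`: uniform distribution on the class `Y` -/
def unifClass {ar : Fin k → ℕ} {n : ℕ} (Y : UL ar n) : Measure (Struct ar (Fin n)) :=
  ((Finset.univ.filter fun M : Struct ar (Fin n) => ⟦M⟧ = Y).card : ℝ≥0∞)⁻¹ •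
    Measure.sum fun M : Struct ar (Fin n) =>
      if ⟦M⟧ = Y then Measure.dirac M else 0

/-- `p* = Σ_Y p_Y 𝔘_Y` -/
def pStar {ar : Fin k → ℕ} {n : ℕ} (p : UL ar n → ℝ) : Measure (Struct ar (Fin n)) :=
  Measure.sum fun Y : UL ar n => ENNReal.ofReal (p Y) • unifClass Y

structure IsDiscCombLevy {Ω : Type} [MeasurableSpace Ω] (ar : Fin k → ℕ) (α : Type)
    (X : ℕ → Ω → Struct ar α) (P : Measure Ω) : Prop where
  measurable : ∀ m, Measurable (X m)
  init : ∀ ω, X 0 ω = emptyS ar α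
  stationary : ∀ s t : ℕ,
    P.map (fun ω => inc (X (t + s) ω) (X s ω)) = P.map (X t)
  indep : ∀ (r : ℕ) (ts : Fin (r + 1) → ℕ), Monotone ts →
    iIndepFun
      (fun (i : Fin r) ω => inc (X (ts i.succ) ω) (X (ts i.castSucc) ω)) P

/-- exchangeability of a discrete time process on `L_{[n]}` -/
def ExchDiscProcFin {Ω : Type} [MeasurableSpace Ω] {ar : Fin k → ℕ} {n : ℕ}
    (X : ℕ → Ω → Struct ar (Fin n)) (P : Measure Ω) : Prop :=
  ∀ (σ : Equiv.Perm (Fin n)) (r : ℕ) (ts : Fin r → ℕ),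
    P.map (fun ω (i : Fin r) => pb ⇑σ (X (ts i) ω)) =
      P.map (fun ω (i : Fin r) => X (ts i) ω)

/- ===== auxiliary lemmas ===== -/
section Aux
variable {ar : Fin k → ℕ} {n : ℕ}

lemma measAll {γ : Type*} [MeasurableSpace γ] [Countable γ] [MeasurableSingletonClass γ]
    (s : Set γ) : MeasurableSet s := s.to_countable.measurableSet

lemma inc_inc {α : Type} (M M' : Struct ar α) : inc (inc M M') M' = M := by
  funext j a; simp [inc]

lemma inc_empty {α : Type} (M : Struct ar α) : inc M (emptyS ar α) = M := by
  funext j a; simp [inc, emptyS]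

lemma pb_inc {α β : Type} (f : β → α) (M M' : Struct ar α) :
    pb f (inc M M') = inc (pb f M) (pb f M') := rfl

lemma pb_pb {α β γ : Type} (f : β → α) (g : γ → β) (M : Struct ar α) :
    pb g (pb f M) = pb (f ∘ g) M := rfl

lemma pb_id {α : Type} (M : Struct ar α) : pb id M = M := rfl

lemma pb_inj {n : ℕ} (σ : Equiv.Perm (Fin n)) :
    Function.Injective (pb (ar := ar) ⇑σ) := by
  intro M M' h
  have := congrArg (pb ⇑σ.symm) h
  rwa [pb_pb, pb_pb, show ⇑σ ∘ ⇑σ.symm = id from funext fun x => σ.apply_symm_apply x,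
    pb_id, pb_id] at this

lemma quot_pb (σ : Equiv.Perm (Fin n)) (M : Struct ar (Fin n)) :
    (⟦pb ⇑σ M⟧ : UL ar n) = ⟦M⟧ := by
  have h : (relabSetoid ar n).r M (pb ⇑σ M) := ⟨σ, rfl⟩
  exact (Quotient.sound h).symm

lemma sum_indicator_card (p : Struct ar (Fin n) → Prop) :
    (∑ M : Struct ar (Fin n), if p M then (1:ℝ≥0∞) else 0) =
      ((Finset.univ.filter p).card : ℝ≥0∞) := by
  rw [← Finset.sum_filter, Finset.sum_const, nsmul_eq_mul, mul_one]

/-- cardinality of a class is positive -/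
lemma card_class_pos (Y : UL ar n) :
    0 < (Finset.univ.filter fun M : Struct ar (Fin n) => (⟦M⟧ : UL ar n) = Y).card := by
  refine Finset.card_pos.2 ⟨Y.out, ?_⟩
  simp [Quotient.out_eq]

lemma unifClass_apply (Y : UL ar n) (S : Set (Struct ar (Fin n))) :
    unifClass Y S =
      ((Finset.univ.filter fun M : Struct ar (Fin n) => (⟦M⟧ : UL ar n) = Y).card : ℝ≥0∞)⁻¹ *
        ∑ M ∈ Finset.univ.filter (fun M : Struct ar (Fin n) => (⟦M⟧ : UL ar n) = Y),
          S.indicator 1 M := by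
  rw [unifClass, Measure.smul_apply, Measure.sum_apply _ (measAll S), smul_eq_mul, tsum_fintype]
  congr 1
  have h1 : (∑ M : Struct ar (Fin n), (if (⟦M⟧ : UL ar n) = Y then Measure.dirac M else 0) S) =
      ∑ M : Struct ar (Fin n), (if (⟦M⟧ : UL ar n) = Y then S.indicator 1 M else 0) := by
    refine Finset.sum_congr rfl fun M _ => ?_
    by_cases h : (⟦M⟧ : UL ar n) = Y
    · simp only [h, if_true, Measure.dirac_apply' _ (measAll S)]
    · simp [h]
  rw [h1, ← Finset.sum_filter]

lemma unifClass_singleton (Y : UL ar n) (M : Struct ar (Fin n)) :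
    unifClass Y {M} =
      ((Finset.univ.filter fun M' : Struct ar (Fin n) => (⟦M'⟧ : UL ar n) = Y).card : ℝ≥0∞)⁻¹ *
        (if (⟦M⟧ : UL ar n) = Y then 1 else 0) := by
  rw [unifClass_apply]
  congr 1
  by_cases h : (⟦M⟧ : UL ar n) = Y
  · rw [if_pos h, Finset.sum_eq_single M]
    · simp
    · intro M' _ hne
      exact Set.indicator_of_notMem (by simpa using hne) _
    · intro hM; exact absurd (by simpa using h) hM
  · rw [if_neg h]
    refine Finset.sum_eq_zero fun M' hM' => ?_
    refine Set.indicator_of_notMem ?_ _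
    simp only [Set.mem_singleton_iff]
    rintro rfl
    exact h (by simpa using hM')

lemma unifClass_class (Y Y' : UL ar n) :
    unifClass Y {M : Struct ar (Fin n) | (⟦M⟧ : UL ar n) = Y'} = if Y = Y' then 1 else 0 := by
  rw [unifClass_apply]
  by_cases h : Y = Y'
  · subst h
    rw [if_pos rfl]
    have : (∑ M ∈ Finset.univ.filter (fun M : Struct ar (Fin n) => (⟦M⟧ : UL ar n) = Y),
        ({M : Struct ar (Fin n) | (⟦M⟧ : UL ar n) = Y}).indicator (1 : Struct ar (Fin n) → ℝ≥0∞) M) =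
        ∑ M ∈ Finset.univ.filter (fun M : Struct ar (Fin n) => (⟦M⟧ : UL ar n) = Y), 1 := by
      refine Finset.sum_congr rfl fun M hM => ?_
      have : M ∈ {M : Struct ar (Fin n) | (⟦M⟧ : UL ar n) = Y} := by simpa using hM
      simp [Set.indicator_of_mem this]
    rw [this, Finset.sum_const, nsmul_eq_mul, mul_one, ENNReal.inv_mul_cancel]
    · exact_mod_cast (card_class_pos Y).ne'
    · exact ENNReal.natCast_ne_top _
  · rw [if_neg h]
    have : (∑ M ∈ Finset.univ.filter (fun M : Struct ar (Fin n) => (⟦M⟧ : UL ar n) = Y),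
        ({M : Struct ar (Fin n) | (⟦M⟧ : UL ar n) = Y'}).indicator (1 : Struct ar (Fin n) → ℝ≥0∞) M) = 0 := by
      refine Finset.sum_eq_zero fun M hM => ?_
      refine Set.indicator_of_notMem ?_ _
      simp only [Set.mem_setOf_eq]
      intro hc
      exact h ((by simpa using hM : (⟦M⟧ : UL ar n) = Y).symm.trans hc)
    rw [this, mul_zero]


lemma pStar_singleton (p : UL ar n → ℝ) (M : Struct ar (Fin n)) :
    pStar p {M} = ENNReal.ofReal (p ⟦M⟧) *
      ((Finset.univ.filter fun M' : Struct ar (Fin n) =>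
        (⟦M'⟧ : UL ar n) = (⟦M⟧ : UL ar n)).card : ℝ≥0∞)⁻¹ := by
  rw [pStar, Measure.sum_apply _ (measAll _), tsum_fintype, Finset.sum_eq_single (⟦M⟧ : UL ar n)]
  · rw [Measure.smul_apply, smul_eq_mul, unifClass_singleton, if_pos rfl, mul_one]
  · intro Y _ hne
    rw [Measure.smul_apply, smul_eq_mul, unifClass_singleton, if_neg (fun h => hne h.symm),
      mul_zero, mul_zero]
  · intro h; exact absurd (Finset.mem_univ _) h

lemma pStar_class (p : UL ar n → ℝ) (Y : UL ar n) :
    pStar p {M : Struct ar (Fin n) | (⟦M⟧ : UL ar n) = Y} = ENNReal.ofReal (p Y) := by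
  rw [pStar, Measure.sum_apply _ (measAll _), tsum_fintype, Finset.sum_eq_single Y]
  · rw [Measure.smul_apply, smul_eq_mul, unifClass_class, if_pos rfl, mul_one]
  · intro Y' _ hne
    rw [Measure.smul_apply, smul_eq_mul, unifClass_class, if_neg hne, mul_zero]
  · intro h; exact absurd (Finset.mem_univ _) h

lemma measure_class_eq {μ : Measure (Struct ar (Fin n))}
    (hexc : ∀ (σ : Equiv.Perm (Fin n)) (M : Struct ar (Fin n)), μ {pb ⇑σ M} = μ {M})
    (Y : UL ar n) (M0 : Struct ar (Fin n)) (h0 : (⟦M0⟧ : UL ar n) = Y) :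
    μ {M | (⟦M⟧ : UL ar n) = Y} =
      ((Finset.univ.filter fun M : Struct ar (Fin n) => (⟦M⟧ : UL ar n) = Y).card : ℝ≥0∞) *
        μ {M0} := by
  have hset : {M | (⟦M⟧ : UL ar n) = Y} =
      ⋃ M ∈ Finset.univ.filter (fun M : Struct ar (Fin n) => (⟦M⟧ : UL ar n) = Y), {M} := by
    ext M; simp
  rw [hset, measure_biUnion_finset ?disj (fun _ _ => measAll _)]
  case disj =>
    intro a _ b _ hab
    exact Set.disjoint_singleton.2 hab
  have hconst : ∀ M ∈ Finset.univ.filter (fun M : Struct ar (Fin n) => (⟦M⟧ : UL ar n) = Y),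
      μ {M} = μ {M0} := by
    intro M hM
    have h1 : (⟦M0⟧ : UL ar n) = ⟦M⟧ := by
      rw [h0]; exact ((Finset.mem_filter.1 hM).2).symm
    obtain ⟨σ, hσ⟩ := Quotient.exact h1
    rw [← hσ, hexc σ M0]
  rw [Finset.sum_congr rfl hconst, Finset.sum_const, nsmul_eq_mul]

lemma univ_partition (μ : Measure (Struct ar (Fin n))) [IsProbabilityMeasure μ] :
    ∑ Y : UL ar n, μ {M | (⟦M⟧ : UL ar n) = Y} = 1 := by
  have hset : (Set.univ : Set (Struct ar (Fin n))) =
      ⋃ Y ∈ (Finset.univ : Finset (UL ar n)), {M | (⟦M⟧ : UL ar n) = Y} := by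
    ext M; simp
  have := measure_biUnion_finset (μ := μ)
    (s := (Finset.univ : Finset (UL ar n))) (f := fun Y => {M | (⟦M⟧ : UL ar n) = Y})
    ?disj (fun _ _ => measAll _)
  case disj =>
    intro a _ b _ hab
    rw [Function.onFun, Set.disjoint_left]
    intro M hMa hMb
    exact hab ((hMa : _ = a).symm.trans hMb)
  rw [← this, ← hset, measure_univ]

/-- reconstruction of the process from its increments -/
def build {α : Type} (f : ℕ → Struct ar α) : ℕ → Struct ar α
  | 0 => emptyS ar α
  | (i+1) => inc (f i) (build f i)

lemma build_congr {α : Type} {f g : ℕ → Struct ar α} (i : ℕ) (h : ∀ j < i, f j = g j) :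
    build f i = build g i := by
  induction i with
  | zero => rfl
  | succ i ih =>
    show inc (f i) (build f i) = inc (g i) (build g i)
    rw [h i (Nat.lt_succ_self i), ih fun j hj => h j (hj.trans (Nat.lt_succ_self i))]

end Aux

/-- **Theorem 4.15 (finite case).** -/
theorem discrete_exchangeable_comb_levy_finite
    (ar : Fin k → ℕ) (har : Monotone ar) (n : ℕ)
    {Ω : Type} [MeasurableSpace Ω] (P : Measure Ω) [IsProbabilityMeasure P]
    (X : ℕ → Ω → Struct ar (Fin n)) (hX : IsDiscCombLevy ar (Fin n) X P)
    (hexch : ExchDiscProcFin X P) :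
    iIndepFun (fun m ω => inc (X (m + 1) ω) (X m ω)) P ∧
    (∃! p : UL ar n → ℝ,
      (∀ Y, 0 ≤ p Y) ∧ (∑ Y : UL ar n, p Y = 1) ∧
      ∀ m : ℕ, P.map (fun ω => inc (X (m + 1) ω) (X m ω)) = pStar p) ∧
    (∃ κ : UL ar n → UL ar n → ℝ≥0∞,
      ∀ (m : ℕ) (traj : Fin (m + 1) → UL ar n) (y' : UL ar n),
        P {ω | (∀ i : Fin (m + 1), (⟦X (i : ℕ) ω⟧ : UL ar n) = traj i) ∧
              (⟦X (m + 1) ω⟧ : UL ar n) = y'} =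
          κ (traj (Fin.last m)) y' *
            P {ω | ∀ i : Fin (m + 1), (⟦X (i : ℕ) ω⟧ : UL ar n) = traj i}) := by
  classical
  -- increments
  set D : ℕ → Ω → Struct ar (Fin n) := fun m ω => inc (X (m + 1) ω) (X m ω) with hDdef
  have hDmeas : ∀ m, Measurable (D m) := fun m =>
    (measurable_of_countable
        fun q : Struct ar (Fin n) × Struct ar (Fin n) => inc q.1 q.2).comp
      ((hX.measurable (m + 1)).prodMk (hX.measurable m))
  -- Part 1 : independence of the increments
  have hiInd : iIndepFun D P := by
    rw [iIndepFun_iff_measure_inter_preimage_eq_mul]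
    intro S sets _
    set r := S.sup id + 1 with hr
    have hmem : ∀ m ∈ S, m < r := fun m hm => Nat.lt_succ_of_le (Finset.le_sup (f := id) hm)
    have hmono : Monotone (fun i : Fin (r + 1) => (i : ℕ)) := fun i j hij => hij
    have key := (hX.indep r (fun i => (i : ℕ)) hmono).measure_inter_preimage_eq_mul
      (S.attachFin hmem) (sets := fun i : Fin r => sets (i : ℕ)) (fun i _ => measAll _)
    have key' : P (⋂ i ∈ S.attachFin hmem, D (i : ℕ) ⁻¹' sets (i : ℕ)) =
        ∏ i ∈ S.attachFin hmem, P (D (i : ℕ) ⁻¹' sets (i : ℕ)) := key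
    have hInt : (⋂ m ∈ S, D m ⁻¹' sets m) =
        ⋂ i ∈ S.attachFin hmem, D (i : ℕ) ⁻¹' sets (i : ℕ) := by
      ext ω
      simp only [Set.mem_iInter, Finset.mem_attachFin]
      exact ⟨fun h i hi => h i hi, fun h m hm => h ⟨m, hmem m hm⟩ hm⟩
    have hProd : (∏ m ∈ S, P (D m ⁻¹' sets m)) =
        ∏ i ∈ S.attachFin hmem, P (D (i : ℕ) ⁻¹' sets (i : ℕ)) := by
      refine Finset.prod_bij' (fun m hm => (⟨m, hmem m hm⟩ : Fin r)) (fun i _ => (i : ℕ))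
        (fun m hm => (Finset.mem_attachFin hmem).2 hm)
        (fun i hi => (Finset.mem_attachFin hmem).1 hi)
        (fun m hm => rfl) (fun i hi => rfl) (fun m hm => rfl)
    rw [hInt, hProd, key']
  -- the increment law
  have hlaw : ∀ m, P.map (D m) = P.map (X 1) := by
    intro m
    have h := hX.stationary m 1
    rw [Nat.add_comm 1 m] at h
    exact h
  set μ₁ : Measure (Struct ar (Fin n)) := P.map (X 1) with hμ₁
  have hprob : IsProbabilityMeasure μ₁ := Measure.isProbabilityMeasure_map (hX.measurable 1).aemeasurable
  -- exchangeability of the increment law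
  have hexch1 : ∀ σ : Equiv.Perm (Fin n), μ₁.map (pb ⇑σ) = μ₁ := by
    intro σ
    have h := hexch σ 1 (fun _ => 1)
    have hm1 : Measurable fun ω (_ : Fin 1) => pb ⇑σ (X 1 ω) :=
      measurable_pi_lambda _ fun _ => (measurable_of_countable (pb ⇑σ)).comp (hX.measurable 1)
    have hm2 : Measurable fun ω (_ : Fin 1) => X 1 ω :=
      measurable_pi_lambda _ fun _ => hX.measurable 1
    have hA : P.map (fun ω => pb ⇑σ (X 1 ω)) = P.map (X 1) := by
      calc P.map (fun ω => pb ⇑σ (X 1 ω))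
          = (P.map (fun ω (_ : Fin 1) => pb ⇑σ (X 1 ω))).map
              (fun f : Fin 1 → Struct ar (Fin n) => f 0) := by
            rw [Measure.map_map (measurable_of_countable _) hm1]; rfl
        _ = (P.map (fun ω (_ : Fin 1) => X 1 ω)).map
              (fun f : Fin 1 → Struct ar (Fin n) => f 0) := by rw [h]
        _ = P.map (X 1) := by rw [Measure.map_map (measurable_of_countable _) hm2]; rfl
    rw [show μ₁.map (pb ⇑σ) = P.map (fun ω => pb ⇑σ (X 1 ω)) from
      Measure.map_map (measurable_of_countable _) (hX.measurable 1)]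
    exact hA
  have hsingle : ∀ (σ : Equiv.Perm (Fin n)) (M : Struct ar (Fin n)),
      μ₁ {pb ⇑σ M} = μ₁ {M} := by
    intro σ M
    have h2 : μ₁.map (pb ⇑σ) {pb ⇑σ M} = μ₁ {M} := by
      rw [Measure.map_apply (measurable_of_countable _) (measAll _)]
      congr 1
      ext M'
      simp only [Set.mem_preimage, Set.mem_singleton_iff]
      exact ⟨fun h => pb_inj σ h, fun h => by rw [h]⟩
    rw [hexch1 σ] at h2
    exact h2
  -- the probability vector
  set pfun : UL ar n → ℝ := fun Y => (μ₁ {M | (⟦M⟧ : UL ar n) = Y}).toReal with hpfun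
  have hmain : ∀ m, P.map (D m) = pStar pfun := by
    intro m
    rw [hlaw m]
    refine Measure.ext_of_singleton fun M => ?_
    rw [pStar_singleton, hpfun, ENNReal.ofReal_toReal (measure_ne_top μ₁ _),
      measure_class_eq hsingle (⟦M⟧ : UL ar n) M rfl, mul_comm
        ((Finset.univ.filter fun M' : Struct ar (Fin n) =>
          (⟦M'⟧ : UL ar n) = (⟦M⟧ : UL ar n)).card : ℝ≥0∞) (μ₁ {M}),
      mul_assoc, ENNReal.mul_inv_cancel, mul_one]
    · exact_mod_cast (card_class_pos (⟦M⟧ : UL ar n)).ne'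
    · exact ENNReal.natCast_ne_top _
  refine ⟨hiInd, ⟨pfun, ⟨fun Y => ENNReal.toReal_nonneg, ?_, hmain⟩, ?_⟩, ?_⟩
  · -- sums to one
    rw [hpfun, ← ENNReal.toReal_sum (fun Y _ => measure_ne_top μ₁ _), univ_partition μ₁,
      ENNReal.toReal_one]
  · -- uniqueness
    rintro q ⟨hq0, _, hqlaw⟩
    funext Y
    have h0 : P.map (D 0) = pStar q := hqlaw 0
    rw [hlaw 0] at h0
    have h1 : ENNReal.ofReal (q Y) = μ₁ {M | (⟦M⟧ : UL ar n) = Y} := by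
      rw [← pStar_class q Y, ← h0]
    have := congrArg ENNReal.toReal h1
    rwa [ENNReal.toReal_ofReal (hq0 Y)] at this
  -- Part 3 : Markov property
  set κ : UL ar n → UL ar n → ℝ≥0∞ :=
    fun x y' => μ₁ {d | (⟦inc d x.out⟧ : UL ar n) = y'} with hκ
  refine ⟨κ, ?_⟩
  intro m traj y'
  set A : Set Ω := {ω | ∀ i : Fin (m + 1), (⟦X (i : ℕ) ω⟧ : UL ar n) = traj i} with hA
  -- the conditional probability depends only on the class of the current state
  have gconst : ∀ M : Struct ar (Fin n), (⟦M⟧ : UL ar n) = traj (Fin.last m) →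
      μ₁ {d | (⟦inc d M⟧ : UL ar n) = y'} = κ (traj (Fin.last m)) y' := by
    intro M hM
    obtain ⟨σ, hσ⟩ := Quotient.exact ((Quotient.out_eq (traj (Fin.last m))).trans hM.symm)
    rw [← hσ, hκ]
    conv_lhs => rw [← hexch1 σ]
    rw [Measure.map_apply (measurable_of_countable _) (measAll _)]
    congr 1
    ext d
    simp only [Set.mem_preimage, Set.mem_setOf_eq]
    rw [show inc (pb ⇑σ d) (pb ⇑σ (traj (Fin.last m)).out) =
      pb ⇑σ (inc d (traj (Fin.last m)).out) from rfl, quot_pb]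
  -- reconstruction of X from the increments
  have hXbuild : ∀ (i : ℕ) (ω : Ω), X i ω = build (fun j => D j ω) i := by
    intro i ω
    induction i with
    | zero => rw [hX.init]; rfl
    | succ i ih =>
      show X (i + 1) ω = inc (D i ω) (build (fun j => D j ω) i)
      rw [← ih, hDdef]
      exact (inc_inc (X (i + 1) ω) (X i ω)).symm
  -- independence of the past and the current increment
  have hV : Measurable fun ω (i : Fin (m + 1)) => X (i : ℕ) ω :=
    measurable_pi_lambda _ fun i => hX.measurable _
  have hIndep2 : IndepFun (fun ω (i : Fin (m + 1)) => X (i : ℕ) ω) (D m) P := by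
    have hfin := hiInd.indepFun_finset (Finset.range m) {m}
      (by simp only [Finset.disjoint_left, Finset.mem_range, Finset.mem_singleton]
          omega) hDmeas
    have h2 := hfin.comp
      (φ := fun (v : {j // j ∈ Finset.range m} → Struct ar (Fin n)) (i : Fin (m + 1)) =>
        build (fun j => if h : j ∈ Finset.range m then v ⟨j, h⟩ else emptyS ar (Fin n)) (i : ℕ))
      (ψ := fun (v : {j // j ∈ ({m} : Finset ℕ)} → Struct ar (Fin n)) =>
        v ⟨m, Finset.mem_singleton_self m⟩)
      (measurable_of_countable _) (measurable_of_countable _)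
    refine h2.congr (Filter.Eventually.of_forall fun ω => ?_)
      (Filter.Eventually.of_forall fun ω => ?_)
    · funext i
      show build (fun j => if h : j ∈ Finset.range m then D j ω else emptyS ar (Fin n)) (i : ℕ)
        = X (i : ℕ) ω
      rw [hXbuild (i : ℕ) ω]
      refine build_congr _ fun j hj => ?_
      rw [dif_pos (Finset.mem_range.2 (lt_of_lt_of_le hj (Nat.lt_succ_iff.mp i.isLt)))]
    · rfl
  -- factorization for a fixed value of the current state
  have hfact : ∀ M : Struct ar (Fin n),
      P (A ∩ {ω | X m ω = M} ∩ {ω | (⟦inc (D m ω) M⟧ : UL ar n) = y'}) =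
        P (A ∩ {ω | X m ω = M}) * μ₁ {d | (⟦inc d M⟧ : UL ar n) = y'} := by
    intro M
    have hpre1 : A ∩ {ω | X m ω = M} =
        (fun ω (i : Fin (m + 1)) => X (i : ℕ) ω) ⁻¹'
          {v : Fin (m + 1) → Struct ar (Fin n) |
            (∀ i, (⟦v i⟧ : UL ar n) = traj i) ∧ v (Fin.last m) = M} := rfl
    have hpre2 : {ω | (⟦inc (D m ω) M⟧ : UL ar n) = y'} =
        D m ⁻¹' {d | (⟦inc d M⟧ : UL ar n) = y'} := rfl
    rw [hpre1, hpre2,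
      hIndep2.measure_inter_preimage_eq_mul _ _ (measAll _) (measAll _), ← hpre1]
    congr 1
    rw [← hlaw m, Measure.map_apply (hDmeas m) (measAll _)]
  -- decomposition over the value of the current state
  have hmeasA : MeasurableSet A := by
    rw [show A = (fun ω (i : Fin (m + 1)) => X (i : ℕ) ω) ⁻¹'
      {v : Fin (m + 1) → Struct ar (Fin n) | ∀ i, (⟦v i⟧ : UL ar n) = traj i} from rfl]
    exact hV (measAll _)
  have hsplit : ∀ B : Set Ω, MeasurableSet B →
      P B = ∑ M : Struct ar (Fin n), P (B ∩ {ω | X m ω = M}) := by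
    intro B hB
    have hset : B = ⋃ M ∈ (Finset.univ : Finset (Struct ar (Fin n))),
        B ∩ {ω | X m ω = M} := by
      ext ω
      simp only [Set.mem_iUnion, Finset.mem_univ, Set.mem_inter_iff, Set.mem_setOf_eq,
        exists_and_left, exists_prop, true_and]
      exact ⟨fun h => ⟨h, X m ω, rfl⟩, fun h => h.1⟩
    conv_lhs => rw [hset]
    rw [measure_biUnion_finset ?disj2 fun M _ =>
      hB.inter (show MeasurableSet {ω | X m ω = M} from hX.measurable m (measAll {M}))]
    case disj2 =>
      intro a _ b _ hab
      rw [Function.onFun, Set.disjoint_left]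
      rintro ω ⟨-, (ha : X m ω = a)⟩ ⟨-, (hb : X m ω = b)⟩
      exact hab (ha.symm.trans hb)
  -- rewrite the target event
  have hXm1 : ∀ ω, inc (D m ω) (X m ω) = X (m + 1) ω := fun ω => inc_inc _ _
  have hE : {ω | (∀ i : Fin (m + 1), (⟦X (i : ℕ) ω⟧ : UL ar n) = traj i) ∧
      (⟦X (m + 1) ω⟧ : UL ar n) = y'} =
      A ∩ {ω | (⟦inc (D m ω) (X m ω)⟧ : UL ar n) = y'} := by
    ext ω
    simp only [Set.mem_inter_iff, Set.mem_setOf_eq, hA, hXm1 ω]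
  have hmeasE : MeasurableSet (A ∩ {ω | (⟦inc (D m ω) (X m ω)⟧ : UL ar n) = y'}) := by
    refine hmeasA.inter ?_
    have : {ω | (⟦inc (D m ω) (X m ω)⟧ : UL ar n) = y'} =
        (fun ω => (D m ω, X m ω)) ⁻¹'
          {q : Struct ar (Fin n) × Struct ar (Fin n) | (⟦inc q.1 q.2⟧ : UL ar n) = y'} := rfl
    rw [this]
    exact ((hDmeas m).prodMk (hX.measurable m)) (measAll _)
  -- put everything together
  calc P {ω | (∀ i : Fin (m + 1), (⟦X (i : ℕ) ω⟧ : UL ar n) = traj i) ∧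
        (⟦X (m + 1) ω⟧ : UL ar n) = y'}
      = P (A ∩ {ω | (⟦inc (D m ω) (X m ω)⟧ : UL ar n) = y'}) := by rw [hE]
    _ = ∑ M : Struct ar (Fin n),
          P ((A ∩ {ω | (⟦inc (D m ω) (X m ω)⟧ : UL ar n) = y'}) ∩ {ω | X m ω = M}) :=
        hsplit _ hmeasE
    _ = ∑ M : Struct ar (Fin n),
          P (A ∩ {ω | X m ω = M} ∩ {ω | (⟦inc (D m ω) M⟧ : UL ar n) = y'}) := by
        refine Finset.sum_congr rfl fun M _ => ?_
        congr 1
        ext ω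
        simp only [Set.mem_inter_iff, Set.mem_setOf_eq]
        constructor
        · rintro ⟨⟨h1, h2⟩, h3⟩
          refine ⟨⟨h1, h3⟩, ?_⟩
          rw [← h3]; exact h2
        · rintro ⟨⟨h1, h3⟩, h2⟩
          refine ⟨⟨h1, ?_⟩, h3⟩
          rw [h3]; exact h2
    _ = ∑ M : Struct ar (Fin n),
          P (A ∩ {ω | X m ω = M}) * μ₁ {d | (⟦inc d M⟧ : UL ar n) = y'} := by
        exact Finset.sum_congr rfl fun M _ => hfact M
    _ = ∑ M : Struct ar (Fin n),
          P (A ∩ {ω | X m ω = M}) * κ (traj (Fin.last m)) y' := by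
        refine Finset.sum_congr rfl fun M _ => ?_
        by_cases hM : (⟦M⟧ : UL ar n) = traj (Fin.last m)
        · rw [gconst M hM]
        · have hempty : A ∩ {ω | X m ω = M} = ∅ := by
            refine Set.eq_empty_iff_forall_notMem.2 fun ω hω => ?_
            obtain ⟨h1, h2⟩ := hω
            refine hM ?_
            rw [← (h2 : X m ω = M)]
            exact h1 (Fin.last m)
          rw [hempty, measure_empty, zero_mul, zero_mul]
    _ = (∑ M : Struct ar (Fin n), P (A ∩ {ω | X m ω = M})) * κ (traj (Fin.last m)) y' := by
        rw [Finset.sum_mul]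
    _ = P A * κ (traj (Fin.last m)) y' := by rw [← hsplit A hmeasA]
    _ = κ (traj (Fin.last m)) y' * P A := mul_comm _ _

end CLP
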